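/- arXiv:2304.03345 — 2 statements merged into one kernel-verified Lean document; each statement's English description precedes it below -/
import Mathlib

section
/- For every commutative ring R and all elements x, y ∈ R, one has the matrix identities ρ_v(x,y) = σ1(x)·σ2(y), ρ_e(x,y) = σ2(y)·σ0, ρ_f(x,y) = σ0·σ1(x), and consequently ρ_v(x,y)·ρ_e(x,y)·ρ_f(x,y) = 1 and ρ_e(x,y)² = 1 (so the universal rotation matrices define a representation of the oriented cartographic group C₂⁺ = ⟨ρ_v, ρ_e, ρ_f | ρ_v ρ_e ρ_f = ρ_e² = 1⟩ over R). -/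
open Matrix

/-- Grothendieck's universal formula for the fundamental reflection `σ₀`. -/
def sigma0 (R : Type*) [CommRing R] : Matrix (Fin 3) (Fin 3) R :=
  !![-1, 0, 0; 2, 1, 0; 0, 0, 1]

/-- Grothendieck's universal formula for the fundamental reflection `σ₁`, where `x = cos θ`. -/
def sigma1 {R : Type*} [CommRing R] (x : R) : Matrix (Fin 3) (Fin 3) R :=
  !![1, 1 - x, 0; 0, -1, 0; 0, 1 + x, 1]

/-- Grothendieck's universal formula for the fundamental reflection `σ₂`, where `y = cos γ`. -/
def sigma2 {R : Type*} [CommRing R] (y : R) : Matrix (Fin 3) (Fin 3) R :=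
  !![1, 0, 0; 0, 1, 1 - y; 0, 0, -1]

/-- The universal rotation `ρ_v` about a vertex. -/
def rhoV {R : Type*} [CommRing R] (x y : R) : Matrix (Fin 3) (Fin 3) R :=
  !![1, 1 - x, (1 - x) * (1 - y); 0, -1, -1 + y; 0, 1 + x, -1 + (1 + x) * (1 - y)]

/-- The universal rotation `ρ_e` about an edge. -/
def rhoE {R : Type*} [CommRing R] (y : R) : Matrix (Fin 3) (Fin 3) R :=
  !![-1, 0, 0; 2, 1, 1 - y; 0, 0, -1]

/-- The universal rotation `ρ_f` about a face. -/
def rhoF {R : Type*} [CommRing R] (x : R) : Matrix (Fin 3) (Fin 3) R :=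
  !![-1, -1 + x, 0; 2, 1 - 2 * x, 0; 0, 1 + x, 1]

/-!
Once the rotations are written as the products `σ₁σ₂`, `σ₂σ₀`, `σ₀σ₁` of the reflections, the
relations are formal: the reflections are involutions and `σ₀`, `σ₂` commute, so
`ρ_v ρ_e ρ_f = σ₁σ₂ · σ₂σ₀ · σ₀σ₁ = 1` and `ρ_e² = σ₂² σ₀² = 1`.
-/

section Reflections

variable {R : Type*} [CommRing R] (x y : R)

theorem sigma0_mul_self : sigma0 R * sigma0 R = 1 := by
  ext i j
  fin_cases i <;> fin_cases j <;> simp [sigma0, mul_apply, Fin.sum_univ_three]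

theorem sigma1_mul_self : sigma1 x * sigma1 x = 1 := by
  ext i j
  fin_cases i <;> fin_cases j <;> simp [sigma1, mul_apply, Fin.sum_univ_three]

theorem sigma2_mul_self : sigma2 y * sigma2 y = 1 := by
  ext i j
  fin_cases i <;> fin_cases j <;> simp [sigma2, mul_apply, Fin.sum_univ_three]

theorem commute_sigma2_sigma0 : Commute (sigma2 y) (sigma0 R) := by
  ext i j
  fin_cases i <;> fin_cases j <;> simp [sigma2, sigma0, mul_apply, Fin.sum_univ_three]

theorem rhoV_eq_sigma1_mul_sigma2 : rhoV x y = sigma1 x * sigma2 y := by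
  ext i j
  fin_cases i <;> fin_cases j <;>
    simp [rhoV, sigma1, sigma2, mul_apply, Fin.sum_univ_three] <;> ring

theorem rhoE_eq_sigma2_mul_sigma0 : rhoE y = sigma2 y * sigma0 R := by
  ext i j
  fin_cases i <;> fin_cases j <;> simp [rhoE, sigma2, sigma0, mul_apply, Fin.sum_univ_three]

theorem rhoF_eq_sigma0_mul_sigma1 : rhoF x = sigma0 R * sigma1 x := by
  ext i j
  fin_cases i <;> fin_cases j <;>
    simp [rhoF, sigma0, sigma1, mul_apply, Fin.sum_univ_three] <;> ring

end Reflections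

/-- The universal rotation matrices are the pairwise products of the reflections and satisfy
the defining relations of the oriented cartographic group
`C₂⁺ = ⟨ρ_v, ρ_e, ρ_f | ρ_v ρ_e ρ_f = ρ_e² = 1⟩` over any commutative ring. -/
theorem oriented_cartographic_relations (R : Type*) [CommRing R] (x y : R) :
    rhoV x y = sigma1 x * sigma2 y ∧
    rhoE y = sigma2 y * sigma0 R ∧
    rhoF x = sigma0 R * sigma1 x ∧
    rhoV x y * rhoE y * rhoF x = 1 ∧
    rhoE (R := R) y ^ 2 = 1 := by
  refine ⟨rhoV_eq_sigma1_mul_sigma2 x y, rhoE_eq_sigma2_mul_sigma0 y,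
    rhoF_eq_sigma0_mul_sigma1 x, ?_, ?_⟩
  · calc rhoV x y * rhoE y * rhoF x
        = sigma1 x * (sigma2 y * sigma2 y) * (sigma0 R * sigma0 R) * sigma1 x := by
          rw [rhoV_eq_sigma1_mul_sigma2, rhoE_eq_sigma2_mul_sigma0, rhoF_eq_sigma0_mul_sigma1]
          simp only [mul_assoc]
      _ = 1 := by rw [sigma2_mul_self, sigma0_mul_self, mul_one, mul_one, sigma1_mul_self]
  · rw [rhoE_eq_sigma2_mul_sigma0, (commute_sigma2_sigma0 y).mul_pow, pow_two, pow_two,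
      sigma2_mul_self, sigma0_mul_self, one_mul]
end

section
/- Let n ≥ 1 be a natural number and let R and U be the 3×3 integer matrices with rows (−2,−2,−2), (2,2,2), (0,0,0) and (0,0,0), (−2,−2,−2), (2,2,2) respectively. For natural numbers a and b, the image of (1 + R)^a · (1 + U)^b under the reduction map to 3×3 matrices over ZMod n equals the identity matrix if and only if n divides 2a and n divides 2b. In particular, when n is even this holds iff n/2 divides a and n/2 divides b, and when n is odd iff n divides a and n divides b. -/
/-!
`R` and `U` square to zero and `R * U = 0`, so `(1 + R)^a (1 + U)^b = 1 + a R + b U`. Every entry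
of `a R + b U` is one of `±2a`, `±2b`, `2a - 2b`, so it vanishes mod `n` exactly when `2a` and `2b`
do. The parity cases are then elementary divisibility.
-/

open Matrix

/-- The translation part of the unit rightward shift of the square grid. -/
def gridR : Matrix (Fin 3) (Fin 3) ℤ :=
  !![-2, -2, -2; 2, 2, 2; 0, 0, 0]

/-- The translation part of the unit upward shift of the square grid. -/
def gridU : Matrix (Fin 3) (Fin 3) ℤ :=
  !![0, 0, 0; -2, -2, -2; 2, 2, 2]

theorem one_add_pow_of_mul_self_eq_zero {R : Type*} [Ring R] {x : R} (hx : x * x = 0) (k : ℕ) :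
    (1 + x) ^ k = 1 + k • x := by
  induction k with
  | zero => simp
  | succ k ih =>
    rw [pow_succ, ih, add_mul, smul_mul_assoc, mul_one_add x x, hx, succ_nsmul]
    simp only [one_mul, add_zero]
    abel

theorem one_add_pow_mul_one_add_pow {R : Type*} [Ring R] {x y : R} (hx : x * x = 0)
    (hy : y * y = 0) (hxy : x * y = 0) (a b : ℕ) :
    (1 + x) ^ a * (1 + y) ^ b = 1 + (a • x + b • y) := by
  rw [one_add_pow_of_mul_self_eq_zero hx, one_add_pow_of_mul_self_eq_zero hy, add_mul, mul_add,
    mul_add, smul_mul_smul_comm, hxy]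
  simp only [one_mul, mul_one, smul_zero, add_zero]
  abel

theorem Matrix.map_intCast_eq_one_iff {m : Type*} [Fintype m] [DecidableEq m] (n : ℕ)
    (M : Matrix m m ℤ) :
    M.map (Int.cast : ℤ → ZMod n) = 1 ↔ ∀ i j, (n : ℤ) ∣ (M - 1) i j := by
  have hmap : ∀ N : Matrix m m ℤ,
      N.map (Int.cast : ℤ → ZMod n) = (Int.castRingHom _).mapMatrix N := fun _ => rfl
  rw [← sub_eq_zero, hmap, ← map_one (Int.castRingHom (ZMod n)).mapMatrix, ← map_sub, ← hmap,
    ← Matrix.ext_iff]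
  simp only [Matrix.map_apply, Matrix.zero_apply, ZMod.intCast_zmod_eq_zero_iff_dvd]

theorem gridR_mul_self : gridR * gridR = 0 := by
  ext i j; fin_cases i <;> fin_cases j <;> simp [gridR, Matrix.mul_apply, Fin.sum_univ_three]

theorem gridU_mul_self : gridU * gridU = 0 := by
  ext i j; fin_cases i <;> fin_cases j <;> simp [gridU, Matrix.mul_apply, Fin.sum_univ_three]

theorem gridR_mul_gridU : gridR * gridU = 0 := by
  ext i j
  fin_cases i <;> fin_cases j <;> simp [gridR, gridU, Matrix.mul_apply, Fin.sum_univ_three]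

theorem dvd_smul_gridR_add_smul_gridU_iff (d : ℤ) (a b : ℕ) :
    (∀ i j, d ∣ (a • gridR + b • gridU) i j) ↔ d ∣ 2 * a ∧ d ∣ 2 * b := by
  constructor
  · intro h
    simpa [gridR, gridU, mul_comm _ (2 : ℤ)] using And.intro (h 0 0) (h 2 2)
  · rintro ⟨ha, hb⟩ i j
    fin_cases i <;> fin_cases j <;>
      simp [gridR, gridU, mul_comm _ (2 : ℤ), ha, hb, ha.sub hb, ← sub_eq_add_neg]

theorem Nat.dvd_two_mul_iff_div_two_dvd {n a : ℕ} (hn : Even n) : n ∣ 2 * a ↔ n / 2 ∣ a := by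
  obtain ⟨m, rfl⟩ := hn
  rw [← two_mul, Nat.mul_div_cancel_left _ two_pos, Nat.mul_dvd_mul_iff_left two_pos]

theorem Nat.dvd_two_mul_iff_dvd {n a : ℕ} (hn : Odd n) : n ∣ 2 * a ↔ n ∣ a :=
  hn.coprime_two_right.dvd_mul_left

theorem grid_translation_trivial_iff_general (n : ℕ) (a b : ℕ) :
    (((1 + gridR) ^ a * (1 + gridU) ^ b).map (Int.cast : ℤ → ZMod n) = 1 ↔
      n ∣ 2 * a ∧ n ∣ 2 * b) ∧
    (Even n →
      (((1 + gridR) ^ a * (1 + gridU) ^ b).map (Int.cast : ℤ → ZMod n) = 1 ↔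
        n / 2 ∣ a ∧ n / 2 ∣ b)) ∧
    (Odd n →
      (((1 + gridR) ^ a * (1 + gridU) ^ b).map (Int.cast : ℤ → ZMod n) = 1 ↔
        n ∣ a ∧ n ∣ b)) := by
  have key : ((1 + gridR) ^ a * (1 + gridU) ^ b).map (Int.cast : ℤ → ZMod n) = 1 ↔
      n ∣ 2 * a ∧ n ∣ 2 * b := by
    rw [Matrix.map_intCast_eq_one_iff,
      one_add_pow_mul_one_add_pow gridR_mul_self gridU_mul_self gridR_mul_gridU,
      add_sub_cancel_left, dvd_smul_gridR_add_smul_gridU_iff]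
    norm_cast
  refine ⟨key, fun hn => ?_, fun hn => ?_⟩
  · rw [key, Nat.dvd_two_mul_iff_div_two_dvd hn, Nat.dvd_two_mul_iff_div_two_dvd hn]
  · rw [key, Nat.dvd_two_mul_iff_dvd hn, Nat.dvd_two_mul_iff_dvd hn]

/-- Reducing the square-grid polyhedron modulo `n`: the translation
`(1 + R)^a (1 + U)^b` becomes trivial over `ZMod n` exactly when `n ∣ 2a` and `n ∣ 2b`;
for even `n` this means `n/2 ∣ a` and `n/2 ∣ b`, for odd `n` it means `n ∣ a` and `n ∣ b`. -/
theorem grid_translation_trivial_iff (n : ℕ) (hn : 1 ≤ n) (a b : ℕ) :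
    (((1 + gridR) ^ a * (1 + gridU) ^ b).map (Int.cast : ℤ → ZMod n) = 1 ↔
      n ∣ 2 * a ∧ n ∣ 2 * b) ∧
    (Even n →
      (((1 + gridR) ^ a * (1 + gridU) ^ b).map (Int.cast : ℤ → ZMod n) = 1 ↔
        n / 2 ∣ a ∧ n / 2 ∣ b)) ∧
    (Odd n →
      (((1 + gridR) ^ a * (1 + gridU) ^ b).map (Int.cast : ℤ → ZMod n) = 1 ↔
        n ∣ a ∧ n ∣ b)) :=
  grid_translation_trivial_iff_general n a b
end
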